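/- arXiv:2509.23696 — 5 statements merged into one kernel-verified Lean document; each statement's English description precedes it below -/
import Mathlib

section
/- A symmetric real matrix Q is strictly copositive if and only if the infimum of Q[z] over all nonzero nonnegative integer vectors z is strictly positive. -/
open Matrix Filter

variable {n : ℕ} (Q : Matrix (Fin n) (Fin n) ℝ)

lemma qf_cont : Continuous fun x : Fin n → ℝ => x ⬝ᵥ Q *ᵥ x := by
  simp only [dotProduct, Matrix.mulVec]
  fun_prop

lemma qf_cross (hQ : Q.IsSymm) (a b : Fin n → ℝ) :
    a ⬝ᵥ Q *ᵥ b = b ⬝ᵥ Q *ᵥ a := by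
  rw [Matrix.dotProduct_mulVec, ← Matrix.mulVec_transpose, hQ.eq, dotProduct_comm]

lemma qf_add (hQ : Q.IsSymm) (a b : Fin n → ℝ) :
    (a + b) ⬝ᵥ Q *ᵥ (a + b) = a ⬝ᵥ Q *ᵥ a + 2 * (a ⬝ᵥ Q *ᵥ b) + b ⬝ᵥ Q *ᵥ b := by
  rw [add_dotProduct, Matrix.mulVec_add, dotProduct_add, dotProduct_add, qf_cross Q hQ b a]
  ring

lemma qf_smul (c : ℝ) (x : Fin n → ℝ) :
    (c • x) ⬝ᵥ Q *ᵥ (c • x) = c ^ 2 * (x ⬝ᵥ Q *ᵥ x) := by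
  rw [smul_dotProduct, Matrix.mulVec_smul, dotProduct_smul]
  simp [smul_eq_mul]; ring

lemma qf_smul_right (c : ℝ) (x v : Fin n → ℝ) :
    x ⬝ᵥ Q *ᵥ (c • v) = c * (x ⬝ᵥ Q *ᵥ v) := by
  rw [Matrix.mulVec_smul, dotProduct_smul, smul_eq_mul]

lemma qf_bound (w : Fin n → ℝ) (ε : ℝ) (hε : 0 ≤ ε) (hw : ∀ i, |w i| ≤ ε) :
    w ⬝ᵥ Q *ᵥ w ≤ (∑ i, ∑ j, |Q i j|) * ε ^ 2 := by
  have hrw : w ⬝ᵥ Q *ᵥ w = ∑ i, ∑ j, w i * Q i j * w j := by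
    simp only [dotProduct, Matrix.mulVec, Finset.mul_sum]
    exact Finset.sum_congr rfl fun i _ => Finset.sum_congr rfl fun j _ => by ring
  rw [hrw, Finset.sum_mul]
  refine Finset.sum_le_sum fun i _ => ?_
  rw [Finset.sum_mul]
  refine Finset.sum_le_sum fun j _ => ?_
  calc w i * Q i j * w j ≤ |w i * Q i j * w j| := le_abs_self _
  _ = |w i| * |Q i j| * |w j| := by rw [abs_mul, abs_mul]
  _ ≤ ε * |Q i j| * ε :=
      mul_le_mul (mul_le_mul_of_nonneg_right (hw i) (abs_nonneg _)) (hw j)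
        (abs_nonneg _) (mul_nonneg hε (abs_nonneg _))
  _ = |Q i j| * ε ^ 2 := by ring

lemma simplex_min (hn : 0 < n)
    (h1 : ∀ x : Fin n → ℝ, (∀ i, 0 ≤ x i) → 0 ≤ x ⬝ᵥ Q *ᵥ x)
    (h2 : ∀ x : Fin n → ℝ, (∀ i, 0 ≤ x i) → x ⬝ᵥ Q *ᵥ x = 0 → x = 0) :
    ∃ m > 0, ∀ x : Fin n → ℝ, (∀ i, 0 ≤ x i) → (∑ i, x i) = 1 → m ≤ x ⬝ᵥ Q *ᵥ x := by
  set K : Set (Fin n → ℝ) := {x | (∀ i, 0 ≤ x i) ∧ ∑ i, x i = 1} with hK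
  have hclosed : IsClosed K := by
    rw [hK, Set.setOf_and]
    apply IsClosed.inter
    · have : {x : Fin n → ℝ | ∀ i, 0 ≤ x i} = ⋂ i, {x | 0 ≤ x i} := by
        ext x; simp
      rw [this]
      exact isClosed_iInter fun i => isClosed_le continuous_const (continuous_apply i)
    · exact isClosed_eq (by fun_prop) continuous_const
  have hsub : K ⊆ Set.Icc 0 1 := by
    rintro x ⟨hx, hs⟩
    refine ⟨fun i => hx i, fun i => ?_⟩
    calc x i ≤ ∑ j, x j := Finset.single_le_sum (fun j _ => hx j) (Finset.mem_univ i)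
    _ = 1 := hs
  have hcomp : IsCompact K := (isCompact_Icc).of_isClosed_subset hclosed hsub
  have i₀ : Fin n := ⟨0, hn⟩
  have hne : K.Nonempty := by
    refine ⟨Pi.single i₀ 1, fun i => ?_, ?_⟩
    · by_cases h : i = i₀ <;> simp [h, Pi.single_apply]
    · simp
  obtain ⟨a, haK, hmin⟩ := hcomp.exists_isMinOn hne (qf_cont Q).continuousOn
  refine ⟨a ⬝ᵥ Q *ᵥ a, ?_, fun x hx hs => hmin ⟨hx, hs⟩⟩
  rcases (h1 a haK.1).lt_or_eq with h | h
  · exact h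
  · exfalso
    have := h2 a haK.1 h.symm
    rw [hK, this] at haK
    have h2' := haK.2
    simp at h2'

lemma copos_of_int_nonneg
    (hz : ∀ z : Fin n → ℤ, (∀ i, 0 ≤ z i) →
      0 ≤ (fun i => (z i : ℝ)) ⬝ᵥ Q *ᵥ (fun i => (z i : ℝ)))
    (x : Fin n → ℝ) (hx : ∀ i, 0 ≤ x i) : 0 ≤ x ⬝ᵥ Q *ᵥ x := by
  set u : ℕ → (Fin n → ℝ) := fun k i => (⌊(k : ℝ) * x i⌋ : ℝ) / k with hu
  have hconv : Tendsto (fun k => u k) atTop (nhds x) := by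
    rw [tendsto_pi_nhds]
    intro i
    have hle : ∀ᶠ k : ℕ in atTop, u k i ≤ x i := by
      filter_upwards [eventually_ge_atTop 1] with k hk
      have hk' : (0 : ℝ) < k := by positivity
      rw [hu]
      exact (div_le_iff₀ hk').2 (by simpa [mul_comm] using Int.floor_le ((k:ℝ) * x i))
    have hge : ∀ᶠ k : ℕ in atTop, x i - 1 / k ≤ u k i := by
      filter_upwards [eventually_ge_atTop 1] with k hk
      have hk' : (0 : ℝ) < k := by positivity
      rw [hu, sub_le_iff_le_add]
      rw [← add_div, le_div_iff₀ hk']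
      have := Int.sub_one_lt_floor ((k:ℝ) * x i)
      nlinarith [this]
    have hlo : Tendsto (fun k : ℕ => x i - 1 / k) atTop (nhds (x i)) := by
      have := tendsto_one_div_atTop_nhds_zero_nat (𝕜 := ℝ)
      simpa using (tendsto_const_nhds (x := x i)).sub this
    exact tendsto_of_tendsto_of_tendsto_of_le_of_le' hlo tendsto_const_nhds hge hle
  have hQconv : Tendsto (fun k => (u k) ⬝ᵥ Q *ᵥ (u k)) atTop (nhds (x ⬝ᵥ Q *ᵥ x)) :=
    ((qf_cont Q).tendsto x).comp hconv
  refine ge_of_tendsto hQconv ?_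
  filter_upwards [eventually_ge_atTop 1] with k hk
  have hk' : (0 : ℝ) < k := by positivity
  have : u k = ((k : ℝ)⁻¹) • (fun i => ((⌊(k : ℝ) * x i⌋ : ℤ) : ℝ)) := by
    funext i; simp [hu, div_eq_inv_mul]
  rw [this, qf_smul Q]
  have h0 := hz (fun i => ⌊(k : ℝ) * x i⌋) (fun i => Int.floor_nonneg.2 (mul_nonneg hk'.le (hx i)))
  positivity

lemma dirichlet_approx {n : ℕ} (x : Fin n → ℝ) (hx : ∀ i, 0 ≤ x i) (N : ℕ) (hN : 0 < N) :
    ∃ (q : ℕ) (p : Fin n → ℤ), 1 ≤ q ∧ (∀ i, 0 ≤ p i) ∧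
      (∀ i, x i = 0 → p i = 0) ∧ (∀ i, |(p i : ℝ) - q * x i| ≤ 1 / N) := by
  have hNR : (0 : ℝ) < N := by exact_mod_cast hN
  set f : Fin (N ^ n + 1) → (Fin n → Fin N) := fun q i =>
    ⟨⌊(N : ℝ) * Int.fract ((q : ℝ) * x i)⌋₊, by
      rw [Nat.floor_lt (mul_nonneg hNR.le (Int.fract_nonneg _))]
      calc (N : ℝ) * Int.fract ((q : ℝ) * x i) < N * 1 :=
        mul_lt_mul_of_pos_left (Int.fract_lt_one _) hNR
      _ = N := mul_one _⟩ with hf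
  have hcard : Fintype.card (Fin n → Fin N) < Fintype.card (Fin (N ^ n + 1)) := by
    simp [Nat.lt_succ_self]
  obtain ⟨a, b, hab, hfab⟩ := Fintype.exists_ne_map_eq_of_card_lt f hcard
  have key : ∀ a b : Fin (N ^ n + 1), (a : ℕ) < (b : ℕ) → f a = f b →
      ∃ (q : ℕ) (p : Fin n → ℤ), 1 ≤ q ∧ (∀ i, 0 ≤ p i) ∧
        (∀ i, x i = 0 → p i = 0) ∧ (∀ i, |(p i : ℝ) - q * x i| ≤ 1 / N) := by
    intro a b hlt hfe
    refine ⟨(b : ℕ) - (a : ℕ), fun i => ⌊((b : ℕ) : ℝ) * x i⌋ - ⌊((a : ℕ) : ℝ) * x i⌋,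
      by omega, fun i => ?_, fun i hxi => ?_, fun i => ?_⟩
    · rw [sub_nonneg]
      exact Int.floor_le_floor (mul_le_mul_of_nonneg_right (by exact_mod_cast hlt.le) (hx i))
    · simp [hxi]
    · have hcast : ((((b : ℕ) - (a : ℕ) : ℕ)) : ℝ) = ((b : ℕ) : ℝ) - ((a : ℕ) : ℝ) := by
        rw [Nat.cast_sub hlt.le]
      rw [hcast]
      have heq : ((⌊((b : ℕ) : ℝ) * x i⌋ - ⌊((a : ℕ) : ℝ) * x i⌋ : ℤ) : ℝ)
          - (((b : ℕ) : ℝ) - ((a : ℕ) : ℝ)) * x i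
          = Int.fract (((a : ℕ) : ℝ) * x i) - Int.fract (((b : ℕ) : ℝ) * x i) := by
        rw [Int.cast_sub]
        unfold Int.fract
        ring
      rw [heq]
      have hval := congrArg Fin.val (congrFun hfe i)
      simp only [hf] at hval
      set F1 := Int.fract (((a : ℕ) : ℝ) * x i) with hF1
      set F2 := Int.fract (((b : ℕ) : ℝ) * x i) with hF2
      have h1a : (⌊(N : ℝ) * F1⌋₊ : ℝ) ≤ (N : ℝ) * F1 := Nat.floor_le (mul_nonneg hNR.le (Int.fract_nonneg _))
      have h1b : (N : ℝ) * F1 < ⌊(N : ℝ) * F1⌋₊ + 1 := Nat.lt_floor_add_one _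
      have h2a : (⌊(N : ℝ) * F2⌋₊ : ℝ) ≤ (N : ℝ) * F2 := Nat.floor_le (mul_nonneg hNR.le (Int.fract_nonneg _))
      have h2b : (N : ℝ) * F2 < ⌊(N : ℝ) * F2⌋₊ + 1 := Nat.lt_floor_add_one _
      have hvv : (⌊(N : ℝ) * F1⌋₊ : ℝ) = (⌊(N : ℝ) * F2⌋₊ : ℝ) := by exact_mod_cast hval
      have hinv : (N : ℝ) * (1 / N) = 1 := by field_simp
      rw [abs_le]
      constructor <;> nlinarith [hinv, h1a, h1b, h2a, h2b, hvv, hNR]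
  rcases Ne.lt_or_gt (fun h : (a : ℕ) = (b : ℕ) => hab (Fin.ext h)) with h | h
  · exact key a b h hfab
  · exact key b a h hfab.symm

lemma strict_aux (hQ : Q.IsSymm) (c : ℝ) (hc : 0 < c)
    (hlb : ∀ z : Fin n → ℤ, z ≠ 0 → (∀ i, 0 ≤ z i) →
       c ≤ (fun i => (z i : ℝ)) ⬝ᵥ Q *ᵥ (fun i => (z i : ℝ)))
    (h1 : ∀ x : Fin n → ℝ, (∀ i, 0 ≤ x i) → 0 ≤ x ⬝ᵥ Q *ᵥ x)
    (x : Fin n → ℝ) (hx : ∀ i, 0 ≤ x i) (hx0 : x ⬝ᵥ Q *ᵥ x = 0) : x = 0 := by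
  by_contra hne
  obtain ⟨i₀, hi₀⟩ := Function.ne_iff.1 hne
  have hxi₀ : 0 < x i₀ := (hx i₀).lt_of_ne (Ne.symm (by simpa using hi₀))
  set y : Fin n → ℝ := (2 / x i₀) • x with hy_def
  have hy : ∀ i, 0 ≤ y i := fun i => mul_nonneg (by positivity) (hx i)
  have hy0 : y ⬝ᵥ Q *ᵥ y = 0 := by rw [hy_def, qf_smul, hx0, mul_zero]
  have hyi₀ : y i₀ = 2 := by
    simp only [hy_def, Pi.smul_apply, smul_eq_mul]
    field_simp
  have hysupp : ∀ i, y i = 0 ↔ x i = 0 := by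
    intro i
    simp only [hy_def, Pi.smul_apply, smul_eq_mul]
    constructor
    · intro h
      rcases mul_eq_zero.1 h with h | h
      · exact absurd h (by positivity)
      · exact h
    · intro h; rw [h, mul_zero]
  -- C1: cross terms with nonnegative vectors are nonnegative
  have C1 : ∀ v : Fin n → ℝ, (∀ i, 0 ≤ v i) → 0 ≤ y ⬝ᵥ Q *ᵥ v := by
    intro v hv
    have key : ∀ k : ℕ, 1 ≤ k → -(1 / (k : ℝ)) * (v ⬝ᵥ Q *ᵥ v) ≤ 2 * (y ⬝ᵥ Q *ᵥ v) := by
      intro k hk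
      have hkR : (0 : ℝ) < k := by exact_mod_cast hk
      have h0 : 0 ≤ (y + (1 / (k : ℝ)) • v) ⬝ᵥ Q *ᵥ (y + (1 / (k : ℝ)) • v) :=
        h1 _ (fun i => add_nonneg (hy i) (mul_nonneg (by positivity) (hv i)))
      rw [qf_add Q hQ, hy0, qf_smul_right, qf_smul] at h0
      have hkk : (k : ℝ) * (1 / k) = 1 := by field_simp
      nlinarith [h0, sq_nonneg (1 / (k : ℝ))]
    have htend : Tendsto (fun k : ℕ => -(1 / (k : ℝ)) * (v ⬝ᵥ Q *ᵥ v)) atTop (nhds 0) := by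
      have := tendsto_one_div_atTop_nhds_zero_nat (𝕜 := ℝ)
      simpa using ((this.neg).mul_const (v ⬝ᵥ Q *ᵥ v))
    have h2 : (0 : ℝ) ≤ 2 * (y ⬝ᵥ Q *ᵥ v) := by
      refine le_of_tendsto htend ?_
      filter_upwards [eventually_ge_atTop 1] with k hk using key k hk
    linarith
  -- C2: (Q *ᵥ y) i = 0 whenever y i ≠ 0
  have C2 : ∀ i, y i ≠ 0 → (Q *ᵥ y) i = 0 := by
    have ha : ∀ i, 0 ≤ (Q *ᵥ y) i := by
      intro i
      have := C1 (Pi.single i 1) (fun j => by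
        by_cases h : j = i <;> simp [h, Pi.single_apply])
      rw [qf_cross Q hQ] at this
      rwa [show Pi.single i 1 ⬝ᵥ (Q *ᵥ y) = (Q *ᵥ y) i from by
        simp [dotProduct, Pi.single_apply]] at this
    have hsum : ∑ i, y i * (Q *ᵥ y) i = 0 := hy0
    have hzero := (Finset.sum_eq_zero_iff_of_nonneg
      (fun i _ => mul_nonneg (hy i) (ha i))).1 hsum
    intro i hyi
    have := hzero i (Finset.mem_univ i)
    rcases mul_eq_zero.1 this with h | h
    · exact absurd h hyi
    · exact h
  -- C3: cross term with vectors supported on the support of y vanishes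
  have C3 : ∀ e : Fin n → ℝ, (∀ i, y i = 0 → e i = 0) → y ⬝ᵥ Q *ᵥ e = 0 := by
    intro e he
    rw [qf_cross Q hQ]
    refine Finset.sum_eq_zero fun i _ => ?_
    by_cases h : y i = 0
    · rw [he i h, zero_mul]
    · rw [C2 i h, mul_zero]
  -- choose N large
  set T : ℝ := ∑ i, ∑ j, |Q i j| with hT
  have hT0 : 0 ≤ T := Finset.sum_nonneg fun i _ => Finset.sum_nonneg fun j _ => abs_nonneg _
  set N : ℕ := ⌊T / c⌋₊ + 1 with hN_def
  have hN : 0 < N := Nat.succ_pos _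
  have hNR : (0 : ℝ) < N := by exact_mod_cast hN
  have hTN : T * (1 / N) ^ 2 < c := by
    have h1' : T / c < N := by
      have := Nat.lt_floor_add_one (T / c)
      calc T / c < ⌊T / c⌋₊ + 1 := this
      _ = (N : ℝ) := by rw [hN_def]; push_cast; ring
    have h2' : T < c * N := by
      rwa [div_lt_iff₀ hc, mul_comm] at h1'
    have h3' : (1 : ℝ) ≤ N := by exact_mod_cast hN
    have : T * (1 / N) ^ 2 = T / N ^ 2 := by field_simp
    rw [this, div_lt_iff₀ (by positivity)]
    nlinarith
  obtain ⟨q, p, hq, hp0, hpsupp, hperr⟩ := dirichlet_approx y hy N hN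
  have hqR : (1 : ℝ) ≤ q := by exact_mod_cast hq
  -- p ≠ 0
  have hpi₀ : 1 ≤ p i₀ := by
    have herr := hperr i₀
    rw [hyi₀, abs_le] at herr
    have h1N : 1 / (N : ℝ) ≤ 1 := by
      rw [div_le_one hNR]; exact_mod_cast hN
    have : (1 : ℝ) ≤ (p i₀ : ℝ) := by nlinarith [herr.1, herr.2]
    exact_mod_cast this
  have hpne : p ≠ 0 := fun h => by simp [h] at hpi₀
  have hQp : c ≤ (fun i => (p i : ℝ)) ⬝ᵥ Q *ᵥ (fun i => (p i : ℝ)) := hlb p hpne hp0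
  -- decompose p = q • y + e
  set e : Fin n → ℝ := fun i => (p i : ℝ) - q * y i with he_def
  have hdecomp : (fun i => (p i : ℝ)) = (q : ℝ) • y + e := by
    funext i
    simp only [he_def, Pi.add_apply, Pi.smul_apply, smul_eq_mul]
    ring
  have hesupp : ∀ i, y i = 0 → e i = 0 := by
    intro i hyi
    simp only [he_def]
    rw [hpsupp i hyi, hyi]
    simp
  have hQe : (fun i => (p i : ℝ)) ⬝ᵥ Q *ᵥ (fun i => (p i : ℝ)) = e ⬝ᵥ Q *ᵥ e := by
    rw [hdecomp, qf_add Q hQ, qf_smul, hy0, smul_dotProduct]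
    rw [show ((q:ℝ) • (y ⬝ᵥ Q *ᵥ e)) = (q:ℝ) * (y ⬝ᵥ Q *ᵥ e) from rfl, C3 e hesupp]
    ring
  have hbd : e ⬝ᵥ Q *ᵥ e ≤ T * (1 / N) ^ 2 := by
    refine qf_bound Q e (1 / N) (by positivity) fun i => ?_
    simpa [he_def] using hperr i
  rw [hQe] at hQp
  linarith

theorem strictly_copositive_iff_pos_copositive_minimum (n : ℕ) (hn : 0 < n)
    (Q : Matrix (Fin n) (Fin n) ℝ) (hQ : Q.IsSymm) :
    ((∀ x : Fin n → ℝ, (∀ i, 0 ≤ x i) → 0 ≤ x ⬝ᵥ Q *ᵥ x) ∧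
      (∀ x : Fin n → ℝ, (∀ i, 0 ≤ x i) → x ⬝ᵥ Q *ᵥ x = 0 → x = 0)) ↔
    0 < sInf {r : ℝ | ∃ z : Fin n → ℤ, z ≠ 0 ∧ (∀ i, 0 ≤ z i) ∧
      r = (fun i => (z i : ℝ)) ⬝ᵥ Q *ᵥ (fun i => (z i : ℝ))} := by
  set S : Set ℝ := {r : ℝ | ∃ z : Fin n → ℤ, z ≠ 0 ∧ (∀ i, 0 ≤ z i) ∧
      r = (fun i => (z i : ℝ)) ⬝ᵥ Q *ᵥ (fun i => (z i : ℝ))} with hS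
  constructor
  · rintro ⟨h1, h2⟩
    obtain ⟨m, hm, hmin⟩ := simplex_min Q hn h1 h2
    have i₀ : Fin n := ⟨0, hn⟩
    have hne : S.Nonempty := by
      refine ⟨_, Pi.single i₀ 1, ?_, fun i => ?_, rfl⟩
      · intro h
        have := congrFun h i₀
        simp at this
      · by_cases h : i = i₀ <;> simp [h, Pi.single_apply]
    have hlow : ∀ r ∈ S, m ≤ r := by
      rintro r ⟨z, hzne, hznn, rfl⟩
      obtain ⟨j, hj⟩ := Function.ne_iff.1 hzne
      have hj' : z j ≠ 0 := by simpa using hj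
      have hj1 : 1 ≤ z j := lt_of_le_of_ne (hznn j) (Ne.symm hj')
      have hsumz : 1 ≤ ∑ i, z i :=
        hj1.trans (Finset.single_le_sum (fun i _ => hznn i) (Finset.mem_univ j))
      set s : ℝ := ∑ i, ((z i : ℤ) : ℝ) with hs_def
      have hs1 : (1 : ℝ) ≤ s := by
        rw [hs_def]
        exact_mod_cast hsumz
      have hspos : (0 : ℝ) < s := lt_of_lt_of_le one_pos hs1
      set x : Fin n → ℝ := s⁻¹ • (fun i => ((z i : ℤ) : ℝ)) with hx_def
      have hxnn : ∀ i, 0 ≤ x i := fun i => by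
        have : (0 : ℝ) ≤ (z i : ℝ) := by exact_mod_cast hznn i
        simpa [hx_def] using mul_nonneg (inv_nonneg.2 hspos.le) this
      have hxsum : ∑ i, x i = 1 := by
        simp only [hx_def, Pi.smul_apply, smul_eq_mul]
        rw [← Finset.mul_sum, ← hs_def, inv_mul_cancel₀ hspos.ne']
      have hmx := hmin x hxnn hxsum
      have hsx : s • x = (fun i => ((z i : ℤ) : ℝ)) := by
        rw [hx_def, smul_smul, mul_inv_cancel₀ hspos.ne', one_smul]
      have hval : (fun i => ((z i : ℤ) : ℝ)) ⬝ᵥ Q *ᵥ (fun i => ((z i : ℤ) : ℝ))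
          = s ^ 2 * (x ⬝ᵥ Q *ᵥ x) := by
        rw [← hsx, qf_smul]
      rw [hval]
      have hs2 : (1 : ℝ) ≤ s ^ 2 := by nlinarith
      nlinarith [hmx, hm, hs2]
    exact lt_of_lt_of_le hm (le_csInf hne hlow)
  · intro hpos
    have hbdd : BddBelow S := by
      by_contra h
      rw [Real.sInf_of_not_bddBelow h] at hpos
      exact lt_irrefl _ hpos
    have hlb : ∀ z : Fin n → ℤ, z ≠ 0 → (∀ i, 0 ≤ z i) →
        sInf S ≤ (fun i => (z i : ℝ)) ⬝ᵥ Q *ᵥ (fun i => (z i : ℝ)) :=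
      fun z hz hznn => csInf_le hbdd ⟨z, hz, hznn, rfl⟩
    have h1 : ∀ x : Fin n → ℝ, (∀ i, 0 ≤ x i) → 0 ≤ x ⬝ᵥ Q *ᵥ x := by
      refine copos_of_int_nonneg Q (fun z hznn => ?_) 
      by_cases h : z = 0
      · subst h
        simp
      · exact le_of_lt (lt_of_lt_of_le hpos (hlb z h hznn))
    exact ⟨h1, fun x hx hx0 => strict_aux Q hQ (sInf S) hpos hlb h1 x hx hx0⟩
end

section
/- For a strictly copositive symmetric matrix Q and any λ > 0, the set of nonnegative integer vectors z with Q[z] ≤ λ is finite. -/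
open Matrix

theorem finitely_many_short_nonneg_vectors (n : ℕ) (Q : Matrix (Fin n) (Fin n) ℝ)
    (hQ : Q.IsSymm)
    (hcop : ∀ x : Fin n → ℝ, (∀ i, 0 ≤ x i) → 0 ≤ x ⬝ᵥ Q *ᵥ x)
    (hstrict : ∀ x : Fin n → ℝ, (∀ i, 0 ≤ x i) → x ⬝ᵥ Q *ᵥ x = 0 → x = 0)
    (lam : ℝ) (hlam : 0 < lam) :
    {z : Fin n → ℤ | (∀ i, 0 ≤ z i) ∧
      (fun i => (z i : ℝ)) ⬝ᵥ Q *ᵥ (fun i => (z i : ℝ)) ≤ lam}.Finite := by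
  rcases Nat.eq_zero_or_pos n with h0 | hn
  · subst h0
    exact Set.toFinite _
  set f : (Fin n → ℝ) → ℝ := fun x => x ⬝ᵥ Q *ᵥ x with hf
  have hcont : Continuous f := by
    simp only [hf, dotProduct, mulVec]
    fun_prop
  set S : Set (Fin n → ℝ) := {x | (∀ i, 0 ≤ x i) ∧ ∑ i, x i = 1} with hS
  have h1 : IsClosed {x : Fin n → ℝ | ∀ i, 0 ≤ x i} := by
    have : {x : Fin n → ℝ | ∀ i, 0 ≤ x i} = ⋂ i, {x | 0 ≤ x i} := by ext; simp
    rw [this]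
    exact isClosed_iInter fun i => isClosed_le continuous_const (continuous_apply i)
  have h2 : IsClosed {x : Fin n → ℝ | ∑ i, x i = 1} :=
    isClosed_eq (continuous_finset_sum _ fun i _ => continuous_apply i) continuous_const
  have hclosed : IsClosed S := by
    have : S = {x : Fin n → ℝ | ∀ i, 0 ≤ x i} ∩ {x : Fin n → ℝ | ∑ i, x i = 1} := rfl
    rw [this]; exact h1.inter h2
  have hsub : S ⊆ Set.Icc (0 : Fin n → ℝ) 1 := by
    rintro x ⟨hx, hsum⟩
    refine ⟨fun i => hx i, fun i => ?_⟩
    calc x i ≤ ∑ j, x j := Finset.single_le_sum (fun j _ => hx j) (Finset.mem_univ i)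
    _ = 1 := hsum
  have hScompact : IsCompact S := (isCompact_Icc).of_isClosed_subset hclosed hsub
  have hSne : S.Nonempty := by
    refine ⟨fun _ => (n : ℝ)⁻¹, fun i => by positivity, ?_⟩
    simp [Finset.sum_const, Finset.card_univ, mul_inv_cancel₀ (by positivity : (n:ℝ) ≠ 0)]
  obtain ⟨x₀, hx₀S, hmin⟩ := hScompact.exists_isMinOn hSne hcont.continuousOn
  set c : ℝ := f x₀ with hcdef
  have hc : 0 < c := by
    rcases lt_or_eq_of_le (hcop x₀ hx₀S.1) with h | h
    · exact h
    · exfalso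
      have hx0 : x₀ = 0 := hstrict x₀ hx₀S.1 h.symm
      have := hx₀S.2
      rw [hx0] at this
      simp at this
  -- key inequality: c * (∑ x)^2 ≤ f x for x ≥ 0
  have key : ∀ x : Fin n → ℝ, (∀ i, 0 ≤ x i) → c * (∑ i, x i) ^ 2 ≤ f x := by
    intro x hx
    set s : ℝ := ∑ i, x i with hsdef
    have hs0 : 0 ≤ s := Finset.sum_nonneg fun i _ => hx i
    rcases eq_or_lt_of_le hs0 with hs | hs
    · rw [← hs]
      simpa using hcop x hx
    · have hyS : (s⁻¹ • x) ∈ S := by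
        constructor
        · intro i
          have := hx i
          have : 0 ≤ s⁻¹ * x i := by positivity
          simpa using this
        · have : ∑ i, s⁻¹ * x i = s⁻¹ * s := by rw [← Finset.mul_sum]
          simpa [Pi.smul_apply, smul_eq_mul, inv_mul_cancel₀ hs.ne'] using this
      have hfy : c ≤ f (s⁻¹ • x) := hmin hyS
      have hscale : f (s⁻¹ • x) = s⁻¹ * (s⁻¹ * f x) := by
        simp [hf, Matrix.mulVec_smul, smul_dotProduct, dotProduct_smul,
          smul_eq_mul, mul_assoc]
      rw [hscale] at hfy
      have hs' : s ≠ 0 := hs.ne'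
      have := mul_le_mul_of_nonneg_left hfy (by positivity : (0:ℝ) ≤ s * s)
      calc c * s ^ 2 = s * s * c := by ring
      _ ≤ s * s * (s⁻¹ * (s⁻¹ * f x)) := this
      _ = f x := by field_simp
  set B : ℝ := Real.sqrt (lam / c) with hBdef
  have hB0 : 0 ≤ B := Real.sqrt_nonneg _
  refine Set.Finite.subset (Set.finite_Icc (0 : Fin n → ℤ) (fun _ => ⌈B⌉)) ?_
  rintro z ⟨hz, hzlam⟩
  have hzr : ∀ i, (0:ℝ) ≤ (z i : ℝ) := fun i => by exact_mod_cast hz i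
  have hkey := key (fun i => (z i : ℝ)) hzr
  set s : ℝ := ∑ i, (z i : ℝ) with hsdef
  have hs0 : 0 ≤ s := Finset.sum_nonneg fun i _ => hzr i
  have hs2 : s ^ 2 ≤ lam / c := by
    rw [le_div_iff₀ hc]
    have : c * s ^ 2 ≤ lam := le_trans hkey hzlam
    linarith
  have hsB : s ≤ B := by
    rw [hBdef]
    exact (Real.le_sqrt hs0 (by positivity)).mpr hs2
  constructor
  · intro i; exact hz i
  · intro i
    have h1 : (z i : ℝ) ≤ s :=
      Finset.single_le_sum (fun j _ => hzr j) (Finset.mem_univ i)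
    have h2 : (z i : ℝ) ≤ (⌈B⌉ : ℝ) := le_trans (le_trans h1 hsB) (Int.le_ceil B)
    exact_mod_cast h2
end

section
/- Let a ∈ ℤ^n_{>0}, s ∈ ℤ_{>0}, and Q = n·[[aa^T, -sa],[-sa^T, s²]] + [[2I_n, -1_n],[-1_n^T, n]]. If no x ∈ {0,1}^n satisfies a^T x = s, then Q[y] > n for every nonzero y ∈ ℤ^{n+1} with nonnegative entries. -/
open Matrix

lemma key_int (n : ℕ) (hn : 0 < n) (a : Fin n → ℤ) (ha : ∀ i, 0 < a i) (s : ℤ) (hs : 0 < s)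
    (hno : ¬ ∃ x : Fin n → ℤ, (∀ i, x i = 0 ∨ x i = 1) ∧ ∑ i, a i * x i = s)
    (x : Fin n → ℤ) (t : ℤ) (hx : ∀ i, 0 ≤ x i) (ht : 0 ≤ t)
    (hne : t ≠ 0 ∨ ∃ i, x i ≠ 0) :
    (n : ℤ) < n * (∑ i, a i * x i - s * t)^2 + ∑ i, ((x i)^2 + (x i - t)^2) := by
  have hterm_nonneg : ∀ i ∈ Finset.univ, (0:ℤ) ≤ (x i)^2 + (x i - t)^2 := by
    intro i _; positivity
  rcases eq_or_lt_of_le ht with h0 | hpos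
  · -- t = 0
    obtain ⟨i, hi⟩ : ∃ i, x i ≠ 0 := by
      rcases hne with h | h
      · exact absurd h0.symm h
      · exact h
    have hxi : 1 ≤ x i := by have := hx i; omega
    have hS : 1 ≤ ∑ j, a j * x j := by
      have h1 : (1:ℤ) ≤ a i * x i := by nlinarith [ha i]
      have h2 : a i * x i ≤ ∑ j, a j * x j :=
        Finset.single_le_sum (fun j _ => mul_nonneg (ha j).le (hx j)) (Finset.mem_univ i)
      linarith
    have hfirst : (n:ℤ) ≤ n * (∑ j, a j * x j - s * t)^2 := by
      rw [← h0]
      have hsq : (1:ℤ) ≤ (∑ j, a j * x j - s * 0)^2 := by nlinarith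
      nlinarith [hsq]
    have hsecond : (2:ℤ) ≤ ∑ j, ((x j)^2 + (x j - t)^2) := by
      have h1 : (2:ℤ) ≤ (x i)^2 + (x i - t)^2 := by rw [← h0]; nlinarith
      have h2 := Finset.single_le_sum hterm_nonneg (Finset.mem_univ i)
      linarith
    linarith
  · rcases eq_or_lt_of_le (show (1:ℤ) ≤ t by omega) with h1 | h2
    · -- t = 1
      have ht1 : t = 1 := h1.symm
      subst ht1
      have hterm1 : ∀ j, (1:ℤ) ≤ (x j)^2 + (x j - 1)^2 := by
        intro j
        rcases le_or_gt (x j) 0 with h | h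
        · nlinarith
        · nlinarith
      have hsum1 : (n:ℤ) ≤ ∑ j, ((x j)^2 + (x j - 1)^2) := by
        calc (n:ℤ) = ∑ _j : Fin n, (1:ℤ) := by simp
        _ ≤ _ := Finset.sum_le_sum (fun j _ => hterm1 j)
      by_cases hS : ∑ j, a j * x j = s
      · -- some x i not 0/1
        obtain ⟨i, hi⟩ : ∃ i, ¬(x i = 0 ∨ x i = 1) := by
          by_contra h
          push_neg at h
          exact hno ⟨x, fun i => by rcases (h i) with h|h; tauto; tauto, hS⟩
        have hxi : 2 ≤ x i := by have := hx i; omega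
        have hbig : (5:ℤ) ≤ (x i)^2 + (x i - 1)^2 := by nlinarith
        have h4 : (4:ℤ) ≤ (x i)^2 + (x i - 1)^2 - 1 := by linarith
        have hsub : ((x i)^2 + (x i - 1)^2 - 1) ≤ ∑ j, ((x j)^2 + (x j - 1)^2 - 1) := by
          apply Finset.single_le_sum (f := fun j => (x j)^2 + (x j - 1)^2 - 1)
          · intro j _
            have := hterm1 j
            linarith
          · exact Finset.mem_univ i
        have heq : ∑ j, ((x j)^2 + (x j - 1)^2 - 1) = (∑ j, ((x j)^2 + (x j - 1)^2)) - (n:ℤ) := by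
          rw [Finset.sum_sub_distrib]; simp
        have hfirst : (0:ℤ) ≤ n * (∑ j, a j * x j - s * 1)^2 := by positivity
        linarith
      · have hd : (1:ℤ) ≤ (∑ j, a j * x j - s * 1)^2 := by
          have : ∑ j, a j * x j - s * 1 ≠ 0 := by intro h; apply hS; linarith
          have h1 : 1 ≤ |∑ j, a j * x j - s * 1| := Int.one_le_abs this
          nlinarith [sq_abs (∑ j, a j * x j - s * 1), abs_nonneg (∑ j, a j * x j - s * 1)]
        have hfirst : (n:ℤ) ≤ n * (∑ j, a j * x j - s * 1)^2 := by nlinarith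
        linarith
    · -- t ≥ 2
      have ht2 : 2 ≤ t := h2
      have hterm2 : ∀ j, (2:ℤ) ≤ (x j)^2 + (x j - t)^2 := by
        intro j; nlinarith [sq_nonneg (2 * x j - t)]
      have hsum2 : 2 * (n:ℤ) ≤ ∑ j, ((x j)^2 + (x j - t)^2) := by
        calc 2 * (n:ℤ) = ∑ _j : Fin n, (2:ℤ) := by simp [mul_comm]
        _ ≤ _ := Finset.sum_le_sum (fun j _ => hterm2 j)
      have hfirst : (0:ℤ) ≤ n * (∑ j, a j * x j - s * t)^2 := by positivity
      linarith


lemma quad_form_eq (n : ℕ) (c : Fin n → ℝ) (d : ℝ) (u : Fin n → ℝ) (v : ℝ) :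
    (Fin.snoc u v : Fin (n+1) → ℝ) ⬝ᵥ
      (((n : ℝ) • vecMulVec (Fin.snoc c d) (Fin.snoc c d) + Matrix.of (fun i j =>
        if i = Fin.last n then (if j = Fin.last n then (n : ℝ) else -1)
        else if j = Fin.last n then -1 else if i = j then 2 else 0)) *ᵥ (Fin.snoc u v))
    = n * (∑ i, c i * u i + d * v)^2 + ∑ i, ((u i)^2 + (u i - v)^2) := by
  set b := (Fin.snoc c d : Fin (n+1) → ℝ) with hbdef
  set w := (Fin.snoc u v : Fin (n+1) → ℝ) with hwdef
  set M : Matrix (Fin (n+1)) (Fin (n+1)) ℝ := Matrix.of (fun i j =>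
        if i = Fin.last n then (if j = Fin.last n then (n : ℝ) else -1)
        else if j = Fin.last n then -1 else if i = j then 2 else 0) with hMdef
  have hcl : ∀ j : Fin n, (j.castSucc : Fin (n+1)) ≠ Fin.last n :=
    fun j => (Fin.castSucc_lt_last j).ne
  have hb : b ⬝ᵥ w = ∑ i, c i * u i + d * v := by
    simp [dotProduct, Fin.sum_univ_castSucc, hbdef, hwdef]
  have hvmv : vecMulVec b b *ᵥ w = (b ⬝ᵥ w) • b := by
    ext i
    simp only [Matrix.mulVec, Matrix.vecMulVec_apply, dotProduct, Pi.smul_apply, smul_eq_mul]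
    rw [Finset.sum_mul]
    exact Finset.sum_congr rfl fun j _ => by ring
  have hrow : ∀ i : Fin n, (M *ᵥ w) i.castSucc = 2 * u i - v := by
    intro i
    simp only [Matrix.mulVec, dotProduct, hMdef, Matrix.of_apply]
    rw [Fin.sum_univ_castSucc]
    simp [hcl, Fin.castSucc_inj, hwdef, ite_mul, Finset.sum_ite_eq]
    ring
  have hlastrow : (M *ᵥ w) (Fin.last n) = n * v - ∑ j, u j := by
    simp only [Matrix.mulVec, dotProduct, hMdef, Matrix.of_apply]
    rw [Fin.sum_univ_castSucc]
    simp [hcl, hwdef]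
    ring
  have hM : w ⬝ᵥ (M *ᵥ w) = ∑ i : Fin n, ((u i)^2 + (u i - v)^2) := by
    have h1 : w ⬝ᵥ (M *ᵥ w) = ∑ i : Fin (n+1), w i * (M *ᵥ w) i := rfl
    rw [h1, Fin.sum_univ_castSucc]
    simp only [hrow, hlastrow]
    simp only [hwdef, Fin.snoc_castSucc, Fin.snoc_last]
    have expand : ∑ i : Fin n, ((u i)^2 + (u i - v)^2)
        = ∑ i : Fin n, (u i * (2*u i - v) + (v^2 - v * u i)) :=
      Finset.sum_congr rfl fun i _ => by ring
    rw [expand, Finset.sum_add_distrib, Finset.sum_sub_distrib, Finset.sum_const,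
      Finset.card_univ, Fintype.card_fin, nsmul_eq_mul, ← Finset.mul_sum]
    ring
  rw [Matrix.add_mulVec, dotProduct_add, Matrix.smul_mulVec, dotProduct_smul,
    hvmv, dotProduct_smul, smul_eq_mul, smul_eq_mul, dotProduct_comm w b, hb, hM]
  ring

theorem no_subset_sum_solution_gives_value_above_n (n : ℕ) (hn : 0 < n)
    (a : Fin n → ℤ) (ha : ∀ i, 0 < a i) (s : ℤ) (hs : 0 < s)
    (hno : ¬ ∃ x : Fin n → ℤ, (∀ i, x i = 0 ∨ x i = 1) ∧ ∑ i, a i * x i = s) :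
    let b : Fin (n + 1) → ℝ := Fin.snoc (fun i => (a i : ℝ)) (-(s : ℝ))
    let Q : Matrix (Fin (n + 1)) (Fin (n + 1)) ℝ :=
      (n : ℝ) • vecMulVec b b + Matrix.of (fun i j =>
        if i = Fin.last n then (if j = Fin.last n then (n : ℝ) else -1)
        else if j = Fin.last n then -1 else if i = j then 2 else 0)
    ∀ y : Fin (n + 1) → ℤ, y ≠ 0 → (∀ i, 0 ≤ y i) →
      (n : ℝ) < (fun i => (y i : ℝ)) ⬝ᵥ Q *ᵥ (fun i => (y i : ℝ)) := by
  intro b Q y hy hy0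
  set x : Fin n → ℤ := fun i => y i.castSucc with hxdef
  set t : ℤ := y (Fin.last n) with htdef
  have hne : t ≠ 0 ∨ ∃ i, x i ≠ 0 := by
    by_contra h
    push_neg at h
    obtain ⟨h1, h2⟩ := h
    apply hy
    funext i
    refine Fin.lastCases ?_ ?_ i
    · simpa using h1
    · intro j; simpa using h2 j
  have hkey := key_int n hn a ha s hs hno x t (fun i => hy0 _) (hy0 _) hne
  have hyR : (fun i => (y i : ℝ)) = (Fin.snoc (fun i => (x i : ℝ)) (t : ℝ) : Fin (n+1) → ℝ) := by
    funext i
    refine Fin.lastCases ?_ ?_ i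
    · simp [htdef]
    · intro j; simp [hxdef]
  have hQ : (fun i => (y i : ℝ)) ⬝ᵥ Q *ᵥ (fun i => (y i : ℝ))
      = n * (∑ i, (a i : ℝ) * (x i : ℝ) + (-(s : ℝ)) * (t : ℝ))^2
        + ∑ i, ((x i : ℝ)^2 + ((x i : ℝ) - (t : ℝ))^2) := by
    rw [hyR]
    exact quad_form_eq n (fun i => (a i : ℝ)) (-(s : ℝ)) (fun i => (x i : ℝ)) (t : ℝ)
  rw [hQ]
  have hcast : ((n * (∑ i, a i * x i - s * t)^2 + ∑ i, ((x i)^2 + (x i - t)^2) : ℤ) : ℝ)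
      = n * (∑ i, (a i : ℝ) * (x i : ℝ) + (-(s : ℝ)) * (t : ℝ))^2
        + ∑ i, ((x i : ℝ)^2 + ((x i : ℝ) - (t : ℝ))^2) := by
    push_cast
    ring
  rw [← hcast]
  exact_mod_cast hkey
end

section
/- Let a ∈ ℤ^n_{>0}, s ∈ ℤ_{>0}, and Q = n·[[aa^T, -sa],[-sa^T, s²]] + [[2I_n, -1_n],[-1_n^T, n]]. Then for every y = (x, t) ∈ ℤ^{n+1}_{≥0} with t ≥ 2, one has Q[y] ≥ n·(a^T x - ts)² + (t²/2)·n > n. -/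
open Matrix

theorem case_t_ge_two_bound (n : ℕ) (hn : 0 < n)
    (a : Fin n → ℤ) (ha : ∀ i, 0 < a i) (s : ℤ) (hs : 0 < s)
    (x : Fin n → ℤ) (hx : ∀ i, 0 ≤ x i) (t : ℤ) (ht : 2 ≤ t) :
    let b : Fin (n + 1) → ℝ := Fin.snoc (fun i => (a i : ℝ)) (-(s : ℝ))
    let Q : Matrix (Fin (n + 1)) (Fin (n + 1)) ℝ :=
      (n : ℝ) • vecMulVec b b + Matrix.of (fun i j =>
        if i = Fin.last n then (if j = Fin.last n then (n : ℝ) else -1)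
        else if j = Fin.last n then -1 else if i = j then 2 else 0)
    let y : Fin (n + 1) → ℝ := Fin.snoc (fun i => (x i : ℝ)) (t : ℝ)
    (n : ℝ) * ((∑ i, (a i : ℝ) * (x i : ℝ)) - (t : ℝ) * (s : ℝ)) ^ 2
        + ((t : ℝ) ^ 2 / 2) * (n : ℝ) ≤ y ⬝ᵥ Q *ᵥ y ∧
    (n : ℝ) < (n : ℝ) * ((∑ i, (a i : ℝ) * (x i : ℝ)) - (t : ℝ) * (s : ℝ)) ^ 2
        + ((t : ℝ) ^ 2 / 2) * (n : ℝ) := by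
  intro b Q y
  have ht' : (2 : ℝ) ≤ (t : ℝ) := by exact_mod_cast ht
  have hn' : (1 : ℝ) ≤ (n : ℝ) := by exact_mod_cast hn
  set S : ℝ := ∑ i, (a i : ℝ) * (x i : ℝ) with hS
  set E : Matrix (Fin (n + 1)) (Fin (n + 1)) ℝ := Matrix.of (fun i j =>
        if i = Fin.last n then (if j = Fin.last n then (n : ℝ) else -1)
        else if j = Fin.last n then -1 else if i = j then 2 else 0) with hE
  have hfalse : ∀ j : Fin n, (Fin.castSucc j = Fin.last n) = False :=
    fun j => eq_false (Fin.castSucc_lt_last j).ne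
  have hby : b ⬝ᵥ y = S - (t : ℝ) * (s : ℝ) := by
    simp only [dotProduct, b, y, Fin.sum_univ_castSucc, Fin.snoc_castSucc, Fin.snoc_last, hS]
    ring
  have hyb : y ⬝ᵥ b = S - (t : ℝ) * (s : ℝ) := by
    rw [dotProduct_comm]; exact hby
  have hsplit : y ⬝ᵥ Q *ᵥ y = (n : ℝ) * (S - (t : ℝ) * (s : ℝ)) ^ 2 + y ⬝ᵥ E *ᵥ y := by
    have h1 : Q *ᵥ y = (n : ℝ) • ((vecMulVec b b) *ᵥ y) + E *ᵥ y := by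
      simp [Q, E, add_mulVec, smul_mulVec]
    rw [h1, dotProduct_add, dotProduct_smul]
    have hv : ∀ i, ((vecMulVec b b) *ᵥ y) i = b i * (b ⬝ᵥ y) := by
      intro i
      simp [vecMulVec, mulVec, dotProduct, Finset.mul_sum, mul_assoc]
    have h2 : y ⬝ᵥ ((vecMulVec b b) *ᵥ y) = (S - (t : ℝ) * (s : ℝ)) ^ 2 := by
      simp only [dotProduct, hv, hby]
      simp only [← mul_assoc, ← Finset.sum_mul]
      rw [show (∑ i, b i * y i) = b ⬝ᵥ y from rfl, hby,
        show (∑ i, y i * b i) = y ⬝ᵥ b from rfl, hyb, sq] <;> ring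
    rw [h2, smul_eq_mul]
  have hrow : ∀ k : Fin n, (E *ᵥ y) (Fin.castSucc k) = 2 * (x k : ℝ) - (t : ℝ) := by
    intro k
    simp only [mulVec, dotProduct, hE, Matrix.of_apply, Fin.sum_univ_castSucc,
      Fin.snoc_castSucc, Fin.snoc_last, y, hfalse, if_false, Fin.castSucc_inj,
      ite_mul, zero_mul, Finset.sum_ite_eq, Finset.mem_univ, if_true]
    ring
  have hlast : (E *ᵥ y) (Fin.last n) = -(∑ i, (x i : ℝ)) + (n : ℝ) * (t : ℝ) := by
    simp only [mulVec, dotProduct, hE, Matrix.of_apply, Fin.sum_univ_castSucc,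
      Fin.snoc_castSucc, Fin.snoc_last, y, hfalse, if_false, if_true, neg_one_mul]
    rw [Finset.sum_neg_distrib]
  have hEy : y ⬝ᵥ E *ᵥ y
      = (∑ i, (2 * (x i : ℝ) ^ 2 - 2 * (t : ℝ) * (x i : ℝ))) + (n : ℝ) * (t : ℝ) ^ 2 := by
    simp only [dotProduct, Fin.sum_univ_castSucc, Fin.snoc_castSucc, Fin.snoc_last, y,
      hrow, hlast]
    have key : ∑ k, (x k : ℝ) * (2 * (x k : ℝ) - (t : ℝ))
        = (∑ i, (2 * (x i : ℝ) ^ 2 - 2 * (t : ℝ) * (x i : ℝ))) + (t : ℝ) * ∑ i, (x i : ℝ) := by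
      rw [Finset.mul_sum, ← Finset.sum_add_distrib]
      exact Finset.sum_congr rfl fun k _ => by ring
    rw [key]; ring
  constructor
  · rw [hsplit, hEy]
    have hterm : ∀ i : Fin n, -((t : ℝ) ^ 2 / 2) ≤ 2 * (x i : ℝ) ^ 2 - 2 * (t : ℝ) * (x i : ℝ) := by
      intro i
      nlinarith [sq_nonneg (2 * (x i : ℝ) - (t : ℝ))]
    have hsum : (n : ℝ) * (-((t : ℝ) ^ 2 / 2))
        ≤ ∑ i, (2 * (x i : ℝ) ^ 2 - 2 * (t : ℝ) * (x i : ℝ)) := by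
      calc (n : ℝ) * (-((t : ℝ) ^ 2 / 2)) = ∑ _i : Fin n, -((t : ℝ) ^ 2 / 2) := by
            simp [Finset.sum_const, mul_comm]
        _ ≤ _ := Finset.sum_le_sum (fun i _ => hterm i)
    nlinarith [hsum]
  · have h4 : (4 : ℝ) ≤ (t : ℝ) ^ 2 := by nlinarith
    nlinarith [mul_nonneg (by linarith : (0:ℝ) ≤ (n:ℝ)) (sq_nonneg (S - (t : ℝ) * (s : ℝ))),
      mul_nonneg (by linarith : (0:ℝ) ≤ (t:ℝ)^2/2 - 2) (by linarith : (0:ℝ) ≤ (n:ℝ))]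
end

section
/- Let a ∈ ℤ^n_{>0}, s ∈ ℤ_{>0}, and let H ∈ ℝ^{(n+1)×(n+1)} be the matrix with first row (√n a^T, -√n s) and remaining block (-I_n, 1_n). Then Q := n·[[aa^T, -sa],[-sa^T, s²]] + [[2I_n, -1_n],[-1_n^T, n]] satisfies Q = H^T H + diag(I_n, 0), and in particular Q is positive semidefinite plus a nonnegative-on-orthant correction, hence copositive. -/
open Matrix

theorem Q_eq_HtH_plus_diag_and_copositive (n : ℕ)
    (a : Fin n → ℤ) (ha : ∀ i, 0 < a i) (s : ℤ) (hs : 0 < s) :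
    let b : Fin (n + 1) → ℝ := Fin.snoc (fun i => (a i : ℝ)) (-(s : ℝ))
    let Q : Matrix (Fin (n + 1)) (Fin (n + 1)) ℝ :=
      (n : ℝ) • vecMulVec b b + Matrix.of (fun i j =>
        if i = Fin.last n then (if j = Fin.last n then (n : ℝ) else -1)
        else if j = Fin.last n then -1 else if i = j then 2 else 0)
    let H : Matrix (Fin (n + 1)) (Fin (n + 1)) ℝ :=
      Fin.cons (Fin.snoc (fun j => Real.sqrt n * (a j : ℝ)) (-(Real.sqrt n) * (s : ℝ)))
        (fun i => Fin.snoc (fun j => if i = j then (-1 : ℝ) else 0) 1)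
    Q = Hᵀ * H + Matrix.of (fun i j =>
        if i = j ∧ i ≠ Fin.last n then (1 : ℝ) else 0) ∧
    ∀ y : Fin (n + 1) → ℝ, (∀ i, 0 ≤ y i) → 0 ≤ y ⬝ᵥ Q *ᵥ y := by
  intro b Q H
  have hn : Real.sqrt n * Real.sqrt n = (n : ℝ) := Real.mul_self_sqrt (Nat.cast_nonneg n)
  have hkey : Q = Hᵀ * H + Matrix.of (fun i j =>
      if i = j ∧ i ≠ Fin.last n then (1 : ℝ) else 0) := by
    ext i j
    simp only [Q, b, Matrix.add_apply, Matrix.mul_apply, Matrix.of_apply,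
      Matrix.smul_apply, vecMulVec_apply, transpose_apply, smul_eq_mul]
    simp only [H]
    rw [Fin.sum_univ_succ]
    refine Fin.lastCases ?_ (fun i' => ?_) i <;> refine Fin.lastCases ?_ (fun j' => ?_) j <;>
        simp [Fin.cons_zero, Fin.cons_succ, Fin.snoc_last, Fin.snoc_castSucc,
          (Fin.castSucc_lt_last _).ne, mul_ite, ite_mul, Finset.sum_ite_eq,
          Fin.castSucc_inj] <;> ring_nf <;> simp [hn]
    · ring
    · ring
    · ring
    · rcases eq_or_ne i' j' with h | h
      · subst h; simp; ring
      · simp [h, h.symm]; ring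
  refine ⟨hkey, fun y hy => ?_⟩
  rw [hkey, Matrix.add_mulVec, dotProduct_add]
  have h1 : 0 ≤ y ⬝ᵥ (Hᵀ * H) *ᵥ y := by
    rw [← Matrix.mulVec_mulVec, Matrix.dotProduct_mulVec, Matrix.vecMul_transpose]
    exact Finset.sum_nonneg fun i _ => mul_self_nonneg _
  have h2 : 0 ≤ y ⬝ᵥ (Matrix.of (fun i j =>
      if i = j ∧ i ≠ Fin.last n then (1 : ℝ) else 0) : Matrix (Fin (n+1)) (Fin (n+1)) ℝ) *ᵥ y := by
    refine Finset.sum_nonneg fun i _ => ?_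
    simp only [mulVec, dotProduct, Matrix.of_apply, ite_mul, one_mul, zero_mul]
    refine mul_nonneg (hy i) (Finset.sum_nonneg fun j _ => ?_)
    split <;> [exact hy j; exact le_rfl]
  positivity
end
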